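/- Let 0 < r < R, let g : [-R, R] → ℝ be L-Lipschitz, let v₁, v₂ > 0, ω > 0, and let g̃₁, g̃₂ : [-1, 1] → ℝ satisfy |g̃ᵢ(t) - g(vᵢ t)| ≤ ω for all t with |t| ≤ min(1, R/vᵢ), i = 1, 2. Assume v₁ ∈ [r, R/2]. Let λ ≥ 1 and ν > 0 satisfy Lν·max(v₁, v₂) ≤ ω, and suppose |g̃₁(kν) - g̃₂(kν/λ)| ≤ 3ω for every integer k with |kν| ≤ 1. Then |g(v₁ t) - g(v₂ t / λ)| ≤ 7ω for all t with |t| ≤ min(1, Rλ/v₂). -/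
import Mathlib

set_option maxHeartbeats 800000

/-- Grid point lemma: for `ν > 0` and any `t`, there is an integer `k` with
`|kν| ≤ |t|` and `|t - kν| ≤ ν`. -/
lemma grid_pt (ν t : ℝ) (hν : 0 < ν) :
    ∃ k : ℤ, |(k : ℝ) * ν| ≤ |t| ∧ |t - (k : ℝ) * ν| ≤ ν := by
  rcases le_or_gt 0 t with ht | ht
  · refine ⟨⌊t / ν⌋, ?_, ?_⟩
    · have hk0 : (0 : ℝ) ≤ (⌊t / ν⌋ : ℝ) := by
        exact_mod_cast Int.floor_nonneg.2 (div_nonneg ht hν.le)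
      have h1 : (⌊t / ν⌋ : ℝ) ≤ t / ν := Int.floor_le _
      rw [abs_of_nonneg (mul_nonneg hk0 hν.le), abs_of_nonneg ht]
      calc (⌊t / ν⌋ : ℝ) * ν ≤ (t / ν) * ν := by nlinarith
        _ = t := by field_simp
    · have h1 : (⌊t / ν⌋ : ℝ) ≤ t / ν := Int.floor_le _
      have h2 : t / ν < (⌊t / ν⌋ : ℝ) + 1 := Int.lt_floor_add_one _
      have h1' : (⌊t / ν⌋ : ℝ) * ν ≤ t := by
        have := mul_le_mul_of_nonneg_right h1 hν.le
        rwa [div_mul_cancel₀ t hν.ne'] at this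
      have h2' : t < ((⌊t / ν⌋ : ℝ) + 1) * ν := by
        have := mul_lt_mul_of_pos_right h2 hν
        rwa [div_mul_cancel₀ t hν.ne'] at this
      rw [abs_of_nonneg (by linarith)]
      nlinarith
  · refine ⟨⌈t / ν⌉, ?_, ?_⟩
    · have hk0 : (⌈t / ν⌉ : ℝ) ≤ 0 := by
        exact_mod_cast Int.ceil_le.2
          (by simpa using div_nonpos_of_nonpos_of_nonneg ht.le hν.le)
      have h1 : t / ν ≤ (⌈t / ν⌉ : ℝ) := Int.le_ceil _
      have h1' : t ≤ (⌈t / ν⌉ : ℝ) * ν := by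
        have := mul_le_mul_of_nonneg_right h1 hν.le
        rwa [div_mul_cancel₀ t hν.ne'] at this
      rw [abs_of_nonpos (mul_nonpos_of_nonpos_of_nonneg hk0 hν.le), abs_of_nonpos ht.le]
      linarith
    · have h1 : t / ν ≤ (⌈t / ν⌉ : ℝ) := Int.le_ceil _
      have h2 : (⌈t / ν⌉ : ℝ) - 1 < t / ν := by
        have := Int.ceil_lt_add_one (t / ν); linarith
      have h1' : t ≤ (⌈t / ν⌉ : ℝ) * ν := by
        have := mul_le_mul_of_nonneg_right h1 hν.le
        rwa [div_mul_cancel₀ t hν.ne'] at this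
      have h2' : ((⌈t / ν⌉ : ℝ) - 1) * ν < t := by
        have := mul_lt_mul_of_pos_right h2 hν
        rwa [div_mul_cancel₀ t hν.ne'] at this
      rw [abs_of_nonpos (by linarith)]
      nlinarith

/-- (Key intermediate self-similarity estimate.) A grid approximate
embedding of the approximants `g̃₁, g̃₂` forces the approximate functional equation
`|g(v₁ t) - g(v₂ t / λ)| ≤ 7ω` for all `|t| ≤ min(1, Rλ/v₂)`. -/
theorem stmt4 (r R L : ℝ) (hr : 0 < r) (hrR : r < R)
    (g : ℝ → ℝ)
    (hlip : ∀ s t : ℝ, |s| ≤ R → |t| ≤ R → |g s - g t| ≤ L * |s - t|)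
    (v₁ v₂ ω : ℝ) (hv₁ : 0 < v₁) (hv₂ : 0 < v₂) (hω : 0 < ω)
    (g₁ g₂ : ℝ → ℝ)
    (hg₁ : ∀ t : ℝ, |t| ≤ min 1 (R / v₁) → |g₁ t - g (v₁ * t)| ≤ ω)
    (hg₂ : ∀ t : ℝ, |t| ≤ min 1 (R / v₂) → |g₂ t - g (v₂ * t)| ≤ ω)
    (hv₁r : r ≤ v₁) (hv₁R : v₁ ≤ R / 2)
    (lam ν : ℝ) (hlam : 1 ≤ lam) (hν : 0 < ν)
    (hνω : L * ν * max v₁ v₂ ≤ ω)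
    (hgrid : ∀ k : ℤ, |(k : ℝ) * ν| ≤ 1 →
      |g₁ ((k : ℝ) * ν) - g₂ ((k : ℝ) * ν / lam)| ≤ 3 * ω) :
    ∀ t : ℝ, |t| ≤ min 1 (R * lam / v₂) → |g (v₁ * t) - g (v₂ * t / lam)| ≤ 7 * ω := by
  intro t ht
  have hR : 0 < R := hr.trans hrR
  have hlam0 : (0 : ℝ) < lam := lt_of_lt_of_le one_pos hlam
  have hL : 0 ≤ L := by
    have h0 : |g 0 - g R| ≤ L * |0 - R| :=
      hlip 0 R (by simp [hR.le]) (by rw [abs_of_nonneg hR.le])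
    have h0' : |g 0 - g R| ≤ L * R := by
      rwa [show |(0 : ℝ) - R| = R by rw [abs_of_nonpos (by linarith)]; ring] at h0
    nlinarith [abs_nonneg (g 0 - g R)]
  have ht1 : |t| ≤ 1 := ht.trans (min_le_left _ _)
  have ht2 : |t| ≤ R * lam / v₂ := ht.trans (min_le_right _ _)
  have hv2t : v₂ * |t| ≤ R * lam := by
    have := mul_le_mul_of_nonneg_left ht2 hv₂.le
    rwa [mul_div_cancel₀ _ hv₂.ne'] at this
  obtain ⟨k, hk1, hk2⟩ := grid_pt ν t hν
  set s : ℝ := (k : ℝ) * ν with hs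
  have hkν1 : |s| ≤ 1 := hk1.trans ht1
  have hmax1 : v₁ ≤ max v₁ v₂ := le_max_left _ _
  have hmax2 : v₂ ≤ max v₁ v₂ := le_max_right _ _
  have hv₁R' : v₁ ≤ R := by linarith
  -- Domain bounds
  have hd1 : |v₁ * t| ≤ R := by
    rw [abs_mul, abs_of_nonneg hv₁.le]; nlinarith
  have hd2 : |v₁ * s| ≤ R := by
    rw [abs_mul, abs_of_nonneg hv₁.le]; nlinarith [abs_nonneg s]
  have hv2s : v₂ * |s| ≤ R * lam := le_trans (by nlinarith) hv2t
  have hd3 : |v₂ * s / lam| ≤ R := by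
    rw [abs_div, abs_mul, abs_of_nonneg hv₂.le, abs_of_nonneg hlam0.le,
      div_le_iff₀ hlam0]; linarith
  have hd4 : |v₂ * t / lam| ≤ R := by
    rw [abs_div, abs_mul, abs_of_nonneg hv₂.le, abs_of_nonneg hlam0.le,
      div_le_iff₀ hlam0]; linarith
  -- Step 1 : |g (v₁ t) - g (v₁ s)| ≤ ω
  have e1 : |g (v₁ * t) - g (v₁ * s)| ≤ ω := by
    have h := hlip (v₁ * t) (v₁ * s) hd1 hd2
    have habs : |v₁ * t - v₁ * s| = v₁ * |t - s| := by
      rw [← mul_sub, abs_mul, abs_of_nonneg hv₁.le]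
    rw [habs] at h
    have hmm : v₁ * |t - s| ≤ (max v₁ v₂) * ν :=
      mul_le_mul hmax1 hk2 (abs_nonneg _) (le_trans hv₁.le hmax1)
    have : L * (v₁ * |t - s|) ≤ L * ((max v₁ v₂) * ν) :=
      mul_le_mul_of_nonneg_left hmm hL
    calc |g (v₁ * t) - g (v₁ * s)| ≤ L * (v₁ * |t - s|) := h
      _ ≤ L * ((max v₁ v₂) * ν) := this
      _ = L * ν * max v₁ v₂ := by ring
      _ ≤ ω := hνω
  -- Step 2 : |g₁ s - g (v₁ s)| ≤ ω
  have hs1 : |s| ≤ min 1 (R / v₁) := by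
    refine le_min hkν1 ?_
    have : (1 : ℝ) ≤ R / v₁ := by rw [le_div_iff₀ hv₁]; linarith
    linarith
  have e2 : |g₁ s - g (v₁ * s)| ≤ ω := hg₁ s hs1
  -- Step 3 : grid
  have e3 : |g₁ s - g₂ (s / lam)| ≤ 3 * ω := hgrid k hkν1
  -- Step 4 : |g₂ (s/lam) - g (v₂ s / lam)| ≤ ω
  have hs2 : |s / lam| ≤ min 1 (R / v₂) := by
    rw [abs_div, abs_of_nonneg hlam0.le]
    refine le_min ?_ ?_
    · rw [div_le_one hlam0]; linarith
    · rw [div_le_div_iff₀ hlam0 hv₂]; linarith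
  have e4 : |g₂ (s / lam) - g (v₂ * s / lam)| ≤ ω := by
    have h := hg₂ (s / lam) hs2
    rwa [show v₂ * (s / lam) = v₂ * s / lam by ring] at h
  -- Step 5 : |g (v₂ s / lam) - g (v₂ t / lam)| ≤ ω
  have e5 : |g (v₂ * s / lam) - g (v₂ * t / lam)| ≤ ω := by
    have h := hlip (v₂ * s / lam) (v₂ * t / lam) hd3 hd4
    have habs : |v₂ * s / lam - v₂ * t / lam| = v₂ * |s - t| / lam := by
      rw [show v₂ * s / lam - v₂ * t / lam = v₂ * (s - t) / lam by ring,
        abs_div, abs_mul, abs_of_nonneg hv₂.le, abs_of_nonneg hlam0.le]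
    rw [habs] at h
    have hst : |s - t| ≤ ν := by rwa [abs_sub_comm] at hk2
    have hdd : v₂ * |s - t| / lam ≤ v₂ * |s - t| := by
      rw [div_le_iff₀ hlam0]
      nlinarith [abs_nonneg (s - t), mul_nonneg hv₂.le (abs_nonneg (s - t))]
    have hmm : v₂ * |s - t| ≤ (max v₁ v₂) * ν :=
      mul_le_mul hmax2 hst (abs_nonneg _) (le_trans hv₂.le hmax2)
    calc |g (v₂ * s / lam) - g (v₂ * t / lam)| ≤ L * (v₂ * |s - t| / lam) := h
      _ ≤ L * ((max v₁ v₂) * ν) := mul_le_mul_of_nonneg_left (hdd.trans hmm) hL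
      _ = L * ν * max v₁ v₂ := by ring
      _ ≤ ω := hνω
  -- combine
  have h12 := abs_sub_le (g (v₁ * t)) (g (v₁ * s)) (g (v₂ * t / lam))
  have h23 := abs_sub_le (g (v₁ * s)) (g₁ s) (g (v₂ * t / lam))
  have h34 := abs_sub_le (g₁ s) (g₂ (s / lam)) (g (v₂ * t / lam))
  have h45 := abs_sub_le (g₂ (s / lam)) (g (v₂ * s / lam)) (g (v₂ * t / lam))
  have e2' : |g (v₁ * s) - g₁ s| ≤ ω := by rwa [abs_sub_comm] at e2
  linarith
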